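/- Let M be a loopless matroid on a finite ground set E, let F_1 ⊆ F_2 ⊆ ⋯ ⊆ F_k be a chain of flats of M, and let λ_1, …, λ_k be nonnegative real numbers. Then the vector v = λ_1·1_{F_1} + ⋯ + λ_k·1_{F_k} lies in the Bergman set B(M): for every circuit C of M, the minimum of v over C is attained at at least two distinct elements of C. -/

import Mathlib

/-- A circuit of a matroid is a minimal dependent set. -/
def Matroid.Circuit {α : Type*} (M : Matroid α) (C : Set α) : Prop :=
  M.Dep C ∧ ∀ D ⊂ C, ¬ M.Dep D

/-- A matroid is loopless if every singleton contained in the ground set is independent. -/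
def Matroid.Loopless' {α : Type*} (M : Matroid α) : Prop :=
  ∀ e ∈ M.E, M.Indep {e}

/-- A vector `v : α → ℝ` lies in the Bergman set `B(M)` if for every circuit `C` of `M`
the minimum of `v` over `C` is attained at at least two distinct elements of `C`. -/
def Matroid.InBergman {α : Type*} (M : Matroid α) (v : α → ℝ) : Prop :=
  ∀ C, M.Circuit C → ∃ e ∈ C, ∃ f ∈ C, e ≠ f ∧
    (∀ g ∈ C, v e ≤ v g) ∧ (∀ g ∈ C, v f ≤ v g)

/-!
Let `e` minimise `v` on a circuit `C` (a minimiser exists since `v` takes finitely many values).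
If every other `f ∈ C` had `v e < v f`, then, the weights being nonnegative, each such `f` would
lie in some `F i` avoiding `e`. As the `F i` form a chain, all of `C \ {e}` would lie in one flat
avoiding `e`; but `e` lies in the closure of `C \ {e}`.
-/

open Set

lemma Set.exists_isMinOn_of_finite_image {α β : Type*} [LinearOrder β] {f : α → β}
    {s : Set α} (hf : (f '' s).Finite) (hs : s.Nonempty) : ∃ a ∈ s, IsMinOn f s a := by
  obtain ⟨a, ha, hmin⟩ := hf.exists_minimalFor' f s hs
  exact ⟨a, ha, fun x hx => (le_total (f a) (f x)).elim id (hmin hx)⟩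

lemma finite_range_sum_mul_indicator {ι α : Type*} [Fintype ι] (l : ι → ℝ) (F : ι → Set α) :
    (range fun x => ∑ i, l i * (F i).indicator 1 x).Finite :=
  (finite_range fun s : Set ι => ∑ i, l i * s.indicator 1 i).subset <| by
    rintro _ ⟨x, rfl⟩
    exact ⟨{i | x ∈ F i}, by classical simp only [indicator_apply, mem_ofPred_eq, Pi.one_apply]⟩

lemma sum_mul_indicator_le_of_forall_mem_imp {ι α : Type*} [Fintype ι] {l : ι → ℝ}
    (hl : ∀ i, 0 ≤ l i) (F : ι → Set α) {x y : α} (hxy : ∀ i, x ∈ F i → y ∈ F i) :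
    ∑ i, l i * (F i).indicator 1 x ≤ ∑ i, l i * (F i).indicator 1 y := by
  refine Finset.sum_le_sum fun i _ => mul_le_mul_of_nonneg_left ?_ (hl i)
  by_cases hx : x ∈ F i
  · simp [hx, hxy i hx]
  · simp [hx, indicator_apply_nonneg]

lemma Monotone.exists_subset_and_notMem {ι α : Type*} [LinearOrder ι] [Finite ι]
    {F : ι → Set α} (hF : Monotone F) {S : Set α} (hS : S.Nonempty) {e : α}
    (h : ∀ x ∈ S, ∃ i, x ∈ F i ∧ e ∉ F i) : ∃ i, S ⊆ F i ∧ e ∉ F i := by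
  obtain ⟨x₀, hx₀⟩ := hS
  obtain ⟨i, hi, himax⟩ := (toFinite {i | e ∉ F i}).exists_maximal
    ((h x₀ hx₀).imp fun _ => And.right)
  refine ⟨i, fun x hx => ?_, hi⟩
  obtain ⟨j, hxj, hej⟩ := h x hx
  exact hF ((le_total j i).elim id (himax hej)) hxj

namespace Matroid

variable {α : Type*} {M : Matroid α} {C F : Set α} {e : α}

lemma Circuit.isCircuit (hC : M.Circuit C) : M.IsCircuit C :=
  isCircuit_iff_forall_ssubset.2 ⟨hC.1, fun I hI =>
    (M.not_dep_iff (hI.subset.trans hC.1.subset_ground)).1 (hC.2 I hI)⟩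

lemma Loopless'.loopless (hM : M.Loopless') : M.Loopless :=
  loopless_iff_forall_isNonloop.2 fun e he => indep_singleton.1 (hM e he)

lemma IsCircuit.mem_of_diff_singleton_subset_isFlat (hC : M.IsCircuit C) (hF : M.IsFlat F)
    (he : e ∈ C) (hCF : C \ {e} ⊆ F) : e ∈ F :=
  hF.closure ▸ M.closure_subset_closure hCF (hC.mem_closure_sdiff_singleton_of_mem he)

end Matroid

theorem combination_of_chain_of_flats_mem_bergman_general
    {α : Type*} {M : Matroid α} (hloop : M.Loopless')
    {k : ℕ} (F : Fin k → Set α) (hmono : Monotone F) (hflat : ∀ i, M.IsFlat (F i))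
    (l : Fin k → ℝ) (hl : ∀ i, 0 ≤ l i) :
    M.InBergman (fun e => ∑ i, l i * Set.indicator (F i) (1 : α → ℝ) e) := by
  set v : α → ℝ := fun e => ∑ i, l i * Set.indicator (F i) (1 : α → ℝ) e
  intro C hC
  have hCirc := hC.isCircuit
  have hCnt : C.Nontrivial := Matroid.loopless_iff_forall_isCircuit.1 hloop.loopless C hCirc
  obtain ⟨e, heC, hemin⟩ := exists_isMinOn_of_finite_image
    ((finite_range_sum_mul_indicator l F).subset (image_subset_range v C)) hCnt.nonempty
  suffices ∃ f ∈ C, f ≠ e ∧ v f ≤ v e by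
    obtain ⟨f, hfC, hfe, hfe_le⟩ := this
    exact ⟨e, heC, f, hfC, hfe.symm, hemin, fun g hg => hfe_le.trans (hemin hg)⟩
  by_contra! hlt
  have hsep : ∀ f ∈ C \ {e}, ∃ i, f ∈ F i ∧ e ∉ F i := fun f hf => by
    by_contra! h
    exact (hlt f hf.1 hf.2).not_ge (sum_mul_indicator_le_of_forall_mem_imp hl F h)
  obtain ⟨i, hsub, hei⟩ := hmono.exists_subset_and_notMem
    (hCnt.exists_ne e |>.imp fun _ => id) hsep
  exact hei (hCirc.mem_of_diff_singleton_subset_isFlat (hflat i) heC hsub)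

/-- A nonnegative combination of the indicator vectors of a chain of
flats of a loopless matroid `M` on a finite ground set lies in the Bergman set `B(M)`. -/
theorem combination_of_chain_of_flats_mem_bergman
    {α : Type*} {M : Matroid α} (hfin : M.E.Finite) (hloop : M.Loopless')
    {k : ℕ} (F : Fin k → Set α) (hmono : Monotone F) (hflat : ∀ i, M.IsFlat (F i))
    (l : Fin k → ℝ) (hl : ∀ i, 0 ≤ l i) :
    M.InBergman (fun e => ∑ i, l i * Set.indicator (F i) (1 : α → ℝ) e) :=
  combination_of_chain_of_flats_mem_bergman_general hloop F hmono hflat l hl
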